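/- arXiv:1405.2575 — 2 statements merged into one kernel-verified Lean document; each statement's English description precedes it below -/
import Mathlib

section
/- Let ν be a Lévy measure on ℝ^d, let γ ∈ (0,1], and assume ∫_{{|y| ≤ 1}} |y|^{1+γ} ν(dy) < ∞. Let g ∈ C_b^{1+γ}(ℝ^d). Then for every x ∈ ℝ^d the function y ↦ g(x+y) − g(x) − 1_{{|y|≤1}}(y) ⟨y, Dg(x)⟩ is ν-integrable, the function ℒg(x) = ∫_{ℝ^d} (g(x+y) − g(x) − 1_{{|y|≤1}}(y) ⟨y, Dg(x)⟩) ν(dy) is bounded and continuous on ℝ^d, and sup_x |ℒg(x)| ≤ 2 sup_x |g(x)| · ν({y : |y| > 1}) + [Dg]_γ ∫_{{|y| ≤ 1}} |y|^{1+γ} ν(dy). -/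
open MeasureTheory
open scoped ENNReal

noncomputable section

/-- A Lévy measure on `ℝ^d`: σ-finite, no mass at `0`, and `∫ min(1,|y|²) ν(dy) < ∞`. -/
def IsLevyMeasure {d : ℕ} (ν : Measure (EuclideanSpace ℝ (Fin d))) : Prop :=
  SigmaFinite ν ∧ ν {0} = 0 ∧
    (∫⁻ y, ENNReal.ofReal (min 1 (‖y‖ ^ 2)) ∂ν) < ⊤

/-- The `β`-Hölder seminorm `[f]_β` (as the least admissible Hölder constant). -/
def holderSemi {E F : Type*} [NormedAddCommGroup E] [NormedAddCommGroup F]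
    (β : ℝ) (f : E → F) : ℝ :=
  sInf {C : ℝ | 0 ≤ C ∧ ∀ x y, ‖f x - f y‖ ≤ C * ‖x - y‖ ^ β}

/-!
Applying the mean value inequality to `g - Dg x` on the ball of radius `‖y‖` around `x`, the
`γ`-Hölder bound on `Dg` gives `|g (x + y) - g x - Dg x y| ≤ [Dg]_γ ‖y‖^(1+γ)`, while for
`‖y‖ > 1` the integrand is bounded by `2 ‖g‖_∞`. This majorant does not depend on `x` and is
`ν`-integrable by the moment assumption and because a Lévy measure gives finite mass to
`{‖y‖ > 1}`; integrability and the bound follow, and continuity by dominated convergence.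
-/

open Set

section Holder

variable {E F : Type*} [NormedAddCommGroup E] [NormedAddCommGroup F] {β : ℝ} {f : E → F}

lemma holderSemi_nonneg : 0 ≤ holderSemi β f :=
  Real.sInf_nonneg fun _ hC => hC.1

lemma norm_sub_le_holderSemi_mul (hf : ∃ C, 0 ≤ C ∧ ∀ x y, ‖f x - f y‖ ≤ C * ‖x - y‖ ^ β)
    (x y : E) : ‖f x - f y‖ ≤ holderSemi β f * ‖x - y‖ ^ β := by
  rcases eq_or_ne x y with rfl | hxy
  · simpa using mul_nonneg holderSemi_nonneg (Real.rpow_nonneg (norm_nonneg (x - x)) β)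
  have hpos : 0 < ‖x - y‖ ^ β := Real.rpow_pos_of_pos (norm_pos_iff.2 (sub_ne_zero.2 hxy)) β
  rw [← div_le_iff₀ hpos]
  exact le_csInf hf fun C hC => (div_le_iff₀ hpos).2 (hC.2 x y)

end Holder

theorem norm_sub_sub_fderiv_le_of_holder {E F : Type*} [NormedAddCommGroup E] [NormedSpace ℝ E]
    [NormedAddCommGroup F] [NormedSpace ℝ F] {g : E → F} (hg : Differentiable ℝ g)
    {γ C : ℝ} (hγ : 0 ≤ γ) (hC : 0 ≤ C)
    (hH : ∀ x y, ‖fderiv ℝ g x - fderiv ℝ g y‖ ≤ C * ‖x - y‖ ^ γ) (x y : E) :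
    ‖g (x + y) - g x - fderiv ℝ g x y‖ ≤ C * ‖y‖ ^ (1 + γ) := by
  have hball : x + y ∈ Metric.closedBall x ‖y‖ := by simp [dist_eq_norm]
  have hderiv : ∀ z ∈ Metric.closedBall x ‖y‖, ‖fderiv ℝ g z - fderiv ℝ g x‖ ≤ C * ‖y‖ ^ γ :=
    fun z hz => (hH z x).trans <| by gcongr; simpa [dist_eq_norm] using hz
  have hmvt := (convex_closedBall x ‖y‖).norm_image_sub_le_of_norm_fderiv_le'
    (fun z _ => hg z) hderiv (Metric.mem_closedBall_self (norm_nonneg y)) hball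
  rw [add_sub_cancel_left] at hmvt
  rwa [Real.rpow_add' (norm_nonneg y) (by linarith), Real.rpow_one, ← mul_assoc, mul_right_comm]

lemma IsLevyMeasure.measure_one_lt_norm_lt_top {d : ℕ} {ν : Measure (EuclideanSpace ℝ (Fin d))}
    (hν : IsLevyMeasure ν) : ν {y | 1 < ‖y‖} < ∞ := by
  refine lt_of_le_of_lt ?_ hν.2.2
  rw [← lintegral_indicator_one (measurableSet_lt measurable_const measurable_norm)]
  refine lintegral_mono fun y => indicator_apply_le' (fun hy => ?_) fun _ => bot_le
  rw [min_eq_left (one_le_pow₀ (le_of_lt hy))]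
  simp

lemma measurableSet_norm_le_one {E : Type*} [NormedAddCommGroup E] [MeasurableSpace E]
    [OpensMeasurableSpace E] : MeasurableSet {y : E | ‖y‖ ≤ 1} :=
  measurableSet_le measurable_norm measurable_const

lemma measurableSet_one_lt_norm {E : Type*} [NormedAddCommGroup E] [MeasurableSpace E]
    [OpensMeasurableSpace E] : MeasurableSet {y : E | 1 < ‖y‖} :=
  measurableSet_lt measurable_const measurable_norm

lemma integrableOn_rpow_norm_of_lintegral_lt_top {E : Type*} [NormedAddCommGroup E]
    [MeasurableSpace E] [OpensMeasurableSpace E] {ν : Measure E} {γ : ℝ}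
    (hmom : ∫⁻ y in {y : E | ‖y‖ ≤ 1}, ENNReal.ofReal (‖y‖ ^ (1 + γ)) ∂ν < ∞) :
    IntegrableOn (fun y : E => ‖y‖ ^ (1 + γ)) {y | ‖y‖ ≤ 1} ν :=
  (lintegral_ofReal_ne_top_iff_integrable
    (measurable_norm.pow_const _).aestronglyMeasurable
    (ae_of_all _ fun y => Real.rpow_nonneg (norm_nonneg y) _)).1 hmom.ne

section LevyMajorant

variable {E : Type*} [NormedAddCommGroup E] [MeasurableSpace E] [OpensMeasurableSpace E]
  {ν : Measure E} {M C γ : ℝ}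

def levyMajorant (M C γ : ℝ) : E → ℝ :=
  {y : E | ‖y‖ ≤ 1}.indicator (fun y => C * ‖y‖ ^ (1 + γ)) +
    {y : E | 1 < ‖y‖}.indicator (fun _ => 2 * M)

lemma integrable_levyMajorant
    (hmom : ∫⁻ y in {y : E | ‖y‖ ≤ 1}, ENNReal.ofReal (‖y‖ ^ (1 + γ)) ∂ν < ∞)
    (hfar : ν {y : E | 1 < ‖y‖} < ∞) : Integrable (levyMajorant M C γ) ν :=
  ((integrable_indicator_iff measurableSet_norm_le_one).2
      ((integrableOn_rpow_norm_of_lintegral_lt_top hmom).const_mul C)).add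
    ((integrable_indicator_iff measurableSet_one_lt_norm).2 (integrableOn_const hfar.ne))

lemma integral_levyMajorant
    (hmom : ∫⁻ y in {y : E | ‖y‖ ≤ 1}, ENNReal.ofReal (‖y‖ ^ (1 + γ)) ∂ν < ∞)
    (hfar : ν {y : E | 1 < ‖y‖} < ∞) :
    ∫ y, levyMajorant M C γ y ∂ν = 2 * M * (ν {y : E | 1 < ‖y‖}).toReal +
      C * (∫⁻ y in {y : E | ‖y‖ ≤ 1}, ENNReal.ofReal (‖y‖ ^ (1 + γ)) ∂ν).toReal := by
  have hnear := (integrableOn_rpow_norm_of_lintegral_lt_top hmom).const_mul C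
  have hconst : IntegrableOn (fun _ : E => 2 * M) {y : E | 1 < ‖y‖} ν := integrableOn_const hfar.ne
  simp only [levyMajorant, Pi.add_apply]
  rw [integral_add
      ((integrable_indicator_iff measurableSet_norm_le_one).2 hnear)
      ((integrable_indicator_iff measurableSet_one_lt_norm).2 hconst),
    integral_indicator measurableSet_norm_le_one, integral_indicator measurableSet_one_lt_norm,
    integral_const_mul, setIntegral_const, integral_eq_lintegral_of_nonneg_ae
      (ae_of_all _ fun y => Real.rpow_nonneg (norm_nonneg y) _)
      (measurable_norm.pow_const _).aestronglyMeasurable, smul_eq_mul, measureReal_def]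
  ring

end LevyMajorant

section LevyGenerator

variable {E : Type*} [NormedAddCommGroup E] [NormedSpace ℝ E]

def levyIntegrand (g : E → ℝ) (x y : E) : ℝ :=
  g (x + y) - g x - {y : E | ‖y‖ ≤ 1}.indicator (fun y => fderiv ℝ g x y) y

variable {g : E → ℝ} {M C γ : ℝ}

lemma abs_levyIntegrand_le (hg : Differentiable ℝ g) (hM : ∀ x, |g x| ≤ M) (hγ : 0 ≤ γ)
    (hC : 0 ≤ C) (hH : ∀ x y, ‖fderiv ℝ g x - fderiv ℝ g y‖ ≤ C * ‖x - y‖ ^ γ) (x y : E) :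
    |levyIntegrand g x y| ≤ levyMajorant M C γ y := by
  by_cases hy : ‖y‖ ≤ 1
  · have hfar : y ∉ {y : E | 1 < ‖y‖} := by simpa using hy
    simpa [levyIntegrand, levyMajorant, hy, hfar] using
      norm_sub_sub_fderiv_le_of_holder hg hγ hC hH x y
  · have hfar : y ∈ {y : E | 1 < ‖y‖} := by simpa using hy
    simp only [levyIntegrand, levyMajorant, Pi.add_apply, indicator_of_mem hfar,
      indicator_of_notMem (show y ∉ {y : E | ‖y‖ ≤ 1} from hy), sub_zero, zero_add]
    linarith [abs_sub (g (x + y)) (g x), hM (x + y), hM x]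

lemma continuous_levyIntegrand_left (hg : ContDiff ℝ 1 g) (y : E) :
    Continuous fun x => levyIntegrand g x y := by
  have hDg : Continuous fun x => fderiv ℝ g x y :=
    (hg.continuous_fderiv one_ne_zero).clm_apply continuous_const
  simp only [levyIntegrand, indicator_apply]
  exact ((hg.continuous.comp (continuous_id.add continuous_const)).sub hg.continuous).sub
    (continuous_if_const _ (fun _ => hDg) fun _ => continuous_const)

variable [MeasurableSpace E] [OpensMeasurableSpace E]

lemma aestronglyMeasurable_levyIntegrand {ν : Measure E} (hg : Continuous g) (x : E) :
    AEStronglyMeasurable (levyIntegrand g x) ν :=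
  ((hg.comp (continuous_const_add x)).sub continuous_const).aestronglyMeasurable.sub
    ((fderiv ℝ g x).continuous.measurable.indicator measurableSet_norm_le_one).aestronglyMeasurable

end LevyGenerator

theorem generator_well_defined_general
    (d : ℕ) (γ : ℝ) (hγ : 0 < γ ∧ γ ≤ 1)
    (ν : Measure (EuclideanSpace ℝ (Fin d))) (hν : IsLevyMeasure ν)
    (hmom : (∫⁻ y in {y : EuclideanSpace ℝ (Fin d) | ‖y‖ ≤ 1},
      ENNReal.ofReal (‖y‖ ^ (1 + γ)) ∂ν) < ⊤)
    (g : EuclideanSpace ℝ (Fin d) → ℝ)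
    (hg : ContDiff ℝ 1 g) (hgb : ∃ M, ∀ x, |g x| ≤ M)
    (hDgH : ∃ C, 0 ≤ C ∧ ∀ x y, ‖fderiv ℝ g x - fderiv ℝ g y‖ ≤ C * ‖x - y‖ ^ γ) :
    (∀ x, Integrable (fun y =>
        g (x + y) - g x -
          Set.indicator {y : EuclideanSpace ℝ (Fin d) | ‖y‖ ≤ 1}
            (fun y => fderiv ℝ g x y) y) ν) ∧
    Continuous (fun x => ∫ y,
        (g (x + y) - g x -
          Set.indicator {y : EuclideanSpace ℝ (Fin d) | ‖y‖ ≤ 1}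
            (fun y => fderiv ℝ g x y) y) ∂ν) ∧
    ∀ x, |∫ y, (g (x + y) - g x -
          Set.indicator {y : EuclideanSpace ℝ (Fin d) | ‖y‖ ≤ 1}
            (fun y => fderiv ℝ g x y) y) ∂ν| ≤
      2 * (⨆ x, |g x|) * (ν {y : EuclideanSpace ℝ (Fin d) | 1 < ‖y‖}).toReal +
        holderSemi γ (fun x => fderiv ℝ g x) *
          (∫⁻ y in {y : EuclideanSpace ℝ (Fin d) | ‖y‖ ≤ 1},
            ENNReal.ofReal (‖y‖ ^ (1 + γ)) ∂ν).toReal := by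
  set M := ⨆ x, |g x|
  set C := holderSemi γ (fun x => fderiv ℝ g x)
  have hM : ∀ x, |g x| ≤ M := fun x =>
    le_ciSup (hgb.imp fun M₀ hM₀ => by rintro _ ⟨x, rfl⟩; exact hM₀ x) x
  have hH := norm_sub_le_holderSemi_mul hDgH
  have hfar := hν.measure_one_lt_norm_lt_top
  have hdom : Integrable (levyMajorant M C γ) ν := integrable_levyMajorant hmom hfar
  have hle := abs_levyIntegrand_le (hg.differentiable one_ne_zero) hM hγ.1.le holderSemi_nonneg hH
  have hmeas := aestronglyMeasurable_levyIntegrand (ν := ν) hg.continuous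
  have hint : ∀ x, Integrable (levyIntegrand g x) ν := fun x =>
    hdom.mono' (hmeas x) (ae_of_all _ (hle x))
  refine ⟨hint, continuous_of_dominated hmeas (fun x => ae_of_all _ (hle x)) hdom
    (ae_of_all _ (continuous_levyIntegrand_left hg)), fun x => ?_⟩
  calc |∫ y, levyIntegrand g x y ∂ν|
      ≤ ∫ y, levyMajorant M C γ y ∂ν :=
        abs_integral_le_integral_abs.trans (integral_mono (hint x).abs hdom (hle x))
    _ = _ := integral_levyMajorant hmom hfar

/-- for `g ∈ C_b^{1+γ}(ℝ^d)` and a Lévy measure `ν` with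
`∫_{|y|≤1} |y|^{1+γ} ν(dy) < ∞`, the integrand of `ℒg(x)` is `ν`-integrable,
`ℒg` is bounded and continuous, and
`sup_x |ℒg(x)| ≤ 2 ‖g‖_∞ ν(|y|>1) + [Dg]_γ ∫_{|y|≤1} |y|^{1+γ} ν(dy)`. -/
theorem generator_well_defined
    (d : ℕ) (hd : 1 ≤ d) (γ : ℝ) (hγ : 0 < γ ∧ γ ≤ 1)
    (ν : Measure (EuclideanSpace ℝ (Fin d))) (hν : IsLevyMeasure ν)
    (hmom : (∫⁻ y in {y : EuclideanSpace ℝ (Fin d) | ‖y‖ ≤ 1},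
      ENNReal.ofReal (‖y‖ ^ (1 + γ)) ∂ν) < ⊤)
    (g : EuclideanSpace ℝ (Fin d) → ℝ)
    (hg : ContDiff ℝ 1 g) (hgb : ∃ M, ∀ x, |g x| ≤ M)
    (hDgb : ∃ M, ∀ x, ‖fderiv ℝ g x‖ ≤ M)
    (hDgH : ∃ C, 0 ≤ C ∧ ∀ x y, ‖fderiv ℝ g x - fderiv ℝ g y‖ ≤ C * ‖x - y‖ ^ γ) :
    (∀ x, Integrable (fun y =>
        g (x + y) - g x -
          Set.indicator {y : EuclideanSpace ℝ (Fin d) | ‖y‖ ≤ 1}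
            (fun y => fderiv ℝ g x y) y) ν) ∧
    Continuous (fun x => ∫ y,
        (g (x + y) - g x -
          Set.indicator {y : EuclideanSpace ℝ (Fin d) | ‖y‖ ≤ 1}
            (fun y => fderiv ℝ g x y) y) ∂ν) ∧
    ∀ x, |∫ y, (g (x + y) - g x -
          Set.indicator {y : EuclideanSpace ℝ (Fin d) | ‖y‖ ≤ 1}
            (fun y => fderiv ℝ g x y) y) ∂ν| ≤
      2 * (⨆ x, |g x|) * (ν {y : EuclideanSpace ℝ (Fin d) | 1 < ‖y‖}).toReal +
        holderSemi γ (fun x => fderiv ℝ g x) *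
          (∫⁻ y in {y : EuclideanSpace ℝ (Fin d) | ‖y‖ ≤ 1},
            ENNReal.ofReal (‖y‖ ^ (1 + γ)) ∂ν).toReal :=
  generator_well_defined_general d γ hγ ν hν hmom g hg hgb hDgH
end
end

section
/- Let ν be a Lévy measure on ℝ^d, let γ ∈ (0,1] with ∫_{{|y| ≤ 1}} |y|^{1+γ} ν(dy) < ∞, and let b : ℝ^d → ℝ^d be bounded and continuous. Let λ > 0 and let g : ℝ^d → ℝ be bounded and continuous. If v ∈ C_b^{1+γ}(ℝ^d) satisfies λ v(x) − ℒv(x) − ⟨b(x), Dv(x)⟩ = g(x) for every x ∈ ℝ^d, then sup_x |v(x)| ≤ (1/λ) sup_x |g(x)|. -/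
/-! For `δ > 0` the bounded function `v - δ‖·‖²` attains its maximum at some `x₀`, where
`Dv(x₀) = 2δ⟪x₀, ·⟫` and `δ‖x₀‖ ≤ √(2 sup|v| δ)`. Comparing `v (x₀ + y)` with the penalty
bounds the Lévy integrand at `x₀` by a function that tends to `0` as `δ → 0`, dominated by a
multiple of `min 1 ‖y‖²`; the drift term `2δ⟪x₀, b x₀⟫` vanishes as well. Hence
`λ v x ≤ λ v x₀ + λδ‖x‖² ≤ sup g + o(1)`, and the same applied to `-v` gives the lower bound. -/

open MeasureTheory
open scoped ENNReal

noncomputable section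

/-- The nonlocal operator `ℒg(x) = ∫ (g(x+y) - g(x) - 1_{|y|≤1}(y) ⟨y, Dg(x)⟩) ν(dy)`. -/
def nonlocalOp {d : ℕ} (ν : Measure (EuclideanSpace ℝ (Fin d)))
    (g : EuclideanSpace ℝ (Fin d) → ℝ) (x : EuclideanSpace ℝ (Fin d)) : ℝ :=
  ∫ y, (g (x + y) - g x -
    Set.indicator {y : EuclideanSpace ℝ (Fin d) | ‖y‖ ≤ 1}
      (fun y => fderiv ℝ g x y) y) ∂ν

open Filter Topology
open scoped RealInnerProductSpace

-- If `f` is not integrable, its Bochner integral is the junk value `0 ≤ ∫ g`.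
theorem integral_le_of_le_of_integrable_nonneg {α : Type*} [MeasurableSpace α] {μ : Measure α}
    {f g : α → ℝ} (hg : Integrable g μ) (hg0 : 0 ≤ g) (hfg : f ≤ g) :
    ∫ a, f a ∂μ ≤ ∫ a, g a ∂μ := by
  by_cases hf : Integrable f μ
  · exact integral_mono hf hg hfg
  · rw [integral_undef hf]
    exact integral_nonneg hg0

section JumpBound

variable {E : Type*} [NormedAddCommGroup E] {M δ ρ : ℝ}

-- Bounds the Lévy integrand of `v` at a maximum point `x₀` of `v - δ‖·‖²`,
-- with `M = 2 sup |v|` and `ρ ≥ δ‖x₀‖`.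
def jumpBound (M δ ρ : ℝ) (y : E) : ℝ :=
  if ‖y‖ ≤ 1 then δ * ‖y‖ ^ 2 else min M (2 * ρ * ‖y‖ + δ * ‖y‖ ^ 2)

theorem jumpBound_nonneg (hM : 0 ≤ M) (hδ : 0 ≤ δ) (hρ : 0 ≤ ρ) (y : E) :
    0 ≤ jumpBound M δ ρ y := by
  unfold jumpBound
  split_ifs <;> positivity

theorem jumpBound_le_mul_min_one_norm_sq (y : E) :
    jumpBound M δ ρ y ≤ max δ M * min 1 (‖y‖ ^ 2) := by
  unfold jumpBound
  split_ifs with hy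
  · have hy2 : ‖y‖ ^ 2 ≤ 1 := pow_le_one₀ (norm_nonneg y) hy
    rw [min_eq_right hy2]
    exact mul_le_mul_of_nonneg_right (le_max_left δ M) (sq_nonneg _)
  · have hy2 : 1 ≤ ‖y‖ ^ 2 := one_le_pow₀ (le_of_not_ge hy)
    rw [min_eq_left hy2, mul_one]
    exact (min_le_left _ _).trans (le_max_right δ M)

variable [MeasurableSpace E] [OpensMeasurableSpace E] {ν : Measure E}

theorem measurable_jumpBound : Measurable (jumpBound M δ ρ : E → ℝ) :=
  Measurable.ite (measurableSet_le continuous_norm.measurable measurable_const)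
    (by fun_prop) (by fun_prop)

theorem integrable_jumpBound (hν : Integrable (fun y => min 1 (‖y‖ ^ 2)) ν)
    (hM : 0 ≤ M) (hδ : 0 ≤ δ) (hρ : 0 ≤ ρ) : Integrable (jumpBound M δ ρ) ν := by
  refine (hν.const_mul (max δ M)).mono' measurable_jumpBound.aestronglyMeasurable
    (ae_of_all _ fun y => ?_)
  rw [Real.norm_of_nonneg (jumpBound_nonneg hM hδ hρ y)]
  exact jumpBound_le_mul_min_one_norm_sq y

theorem tendsto_integral_jumpBound (hν : Integrable (fun y => min 1 (‖y‖ ^ 2)) ν)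
    (hM : 0 ≤ M) :
    Tendsto (fun δ => ∫ y, jumpBound M δ √(M * δ) y ∂ν) (𝓝[>] 0) (𝓝 0) := by
  have hlim : ∀ y : E, Tendsto (fun δ => jumpBound M δ √(M * δ) y) (𝓝[>] 0) (𝓝 0) := by
    intro y
    have hcont : Continuous fun δ => jumpBound M δ √(M * δ) y := by
      unfold jumpBound
      split_ifs <;> fun_prop
    simpa [jumpBound, hM] using (hcont.tendsto 0).mono_left nhdsWithin_le_nhds
  have hbound : ∀ δ ∈ Set.Ioc (0 : ℝ) 1, ∀ y : E,
      ‖jumpBound M δ √(M * δ) y‖ ≤ max 1 M * min 1 (‖y‖ ^ 2) := fun δ hδ y => by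
    rw [Real.norm_of_nonneg (jumpBound_nonneg hM hδ.1.le (Real.sqrt_nonneg _) y)]
    exact (jumpBound_le_mul_min_one_norm_sq y).trans <|
      mul_le_mul_of_nonneg_right (max_le_max_right M hδ.2) (by positivity)
  simpa using tendsto_integral_filter_of_dominated_convergence _
    (Eventually.of_forall fun _ => measurable_jumpBound.aestronglyMeasurable)
    (mem_of_superset (Ioc_mem_nhdsGT one_pos) fun δ hδ => ae_of_all _ (hbound δ hδ))
    (hν.const_mul (max 1 M)) (ae_of_all _ hlim)

end JumpBound

section Penalization

variable {E : Type*} [NormedAddCommGroup E]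

theorem exists_isMaxOn_sub_mul_norm_sq [NormedSpace ℝ E] [ProperSpace E] {v : E → ℝ} {M δ : ℝ}
    (hv : Continuous v) (hM : ∀ z, v z ≤ M) (hδ : 0 < δ) :
    ∃ x₀, IsMaxOn (fun z => v z - δ * ‖z‖ ^ 2) Set.univ x₀ := by
  have hcoercive : Tendsto (fun z : E => M - δ * ‖z‖ ^ 2) (cocompact E) atBot :=
    tendsto_atBot_add_const_left _ M
      (tendsto_neg_atTop_atBot.comp
        (((tendsto_pow_atTop two_ne_zero).const_mul_atTop hδ).comp tendsto_norm_cocompact_atTop))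
  have hcont : Continuous fun z => v z - δ * ‖z‖ ^ 2 := by fun_prop
  obtain ⟨x₀, hx₀⟩ := hcont.exists_forall_ge
    (tendsto_atBot_mono (fun z => by linarith [hM z]) hcoercive)
  exact ⟨x₀, isMaxOn_univ_iff.2 hx₀⟩

namespace IsMaxOn

variable {v : E → ℝ} {δ : ℝ} {x₀ : E}

theorem fderiv_apply_eq_of_sub_mul_norm_sq [InnerProductSpace ℝ E]
    (hmax : IsMaxOn (fun z => v z - δ * ‖z‖ ^ 2) Set.univ x₀) (hv : DifferentiableAt ℝ v x₀)
    (y : E) : fderiv ℝ v x₀ y = 2 * δ * ⟪x₀, y⟫ := by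
  have hpen : HasFDerivAt (fun z : E => δ * ‖z‖ ^ 2) (δ • (2 • innerSL ℝ x₀)) x₀ :=
    (hasStrictFDerivAt_norm_sq x₀).hasFDerivAt.const_mul δ
  have hzero := (hmax.isLocalMax Filter.univ_mem).hasFDerivAt_eq_zero (hv.hasFDerivAt.sub hpen)
  rw [sub_eq_zero] at hzero
  rw [hzero]
  simp only [smul_apply, coe_innerSL_apply, nsmul_eq_mul, Nat.cast_ofNat, smul_eq_mul]
  ring

theorem sub_le_of_sub_mul_norm_sq [InnerProductSpace ℝ E]
    (hmax : IsMaxOn (fun z => v z - δ * ‖z‖ ^ 2) Set.univ x₀) (y : E) :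
    v (x₀ + y) - v x₀ ≤ δ * (2 * ⟪x₀, y⟫ + ‖y‖ ^ 2) := by
  have h := isMaxOn_univ_iff.1 hmax (x₀ + y)
  rw [norm_add_sq_real] at h
  linarith

theorem mul_norm_le_sqrt_of_sub_mul_norm_sq {M : ℝ}
    (hmax : IsMaxOn (fun z => v z - δ * ‖z‖ ^ 2) Set.univ x₀) (hδ : 0 ≤ δ)
    (hM : ∀ z, |v z| ≤ M) : δ * ‖x₀‖ ≤ √(2 * M * δ) := by
  have h0 := isMaxOn_univ_iff.1 hmax 0
  rw [norm_zero, zero_pow two_ne_zero, mul_zero, sub_zero] at h0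
  have hsq : δ * ‖x₀‖ ^ 2 ≤ 2 * M := by
    linarith [(abs_le.1 (hM 0)).1, (abs_le.1 (hM x₀)).2]
  refine Real.le_sqrt_of_sq_le ?_
  calc (δ * ‖x₀‖) ^ 2 = δ * (δ * ‖x₀‖ ^ 2) := by ring
    _ ≤ δ * (2 * M) := mul_le_mul_of_nonneg_left hsq hδ
    _ = 2 * M * δ := by ring

end IsMaxOn

end Penalization

section Euclidean

variable {d : ℕ} {ν : Measure (EuclideanSpace ℝ (Fin d))}

theorem IsLevyMeasure.integrable_min_one_norm_sq (hν : IsLevyMeasure ν) :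
    Integrable (fun y => min 1 (‖y‖ ^ 2)) ν :=
  ⟨by fun_prop, (hasFiniteIntegral_iff_ofReal (ae_of_all _ fun _ => by positivity)).2 hν.2.2⟩

theorem nonlocalOp_neg (v : EuclideanSpace ℝ (Fin d) → ℝ) (x : EuclideanSpace ℝ (Fin d)) :
    nonlocalOp ν (fun z => -v z) x = -nonlocalOp ν v x := by
  unfold nonlocalOp
  rw [← integral_neg, fderiv_fun_neg]
  congr 1 with y
  simp only [neg_apply, Set.indicator_apply]
  split_ifs <;> ring

theorem nonlocalOp_le_integral_jumpBound {v : EuclideanSpace ℝ (Fin d) → ℝ} {M δ : ℝ}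
    {x₀ : EuclideanSpace ℝ (Fin d)} (hν : Integrable (fun y => min 1 (‖y‖ ^ 2)) ν)
    (hmax : IsMaxOn (fun z => v z - δ * ‖z‖ ^ 2) Set.univ x₀) (hv : DifferentiableAt ℝ v x₀)
    (hM : ∀ z, |v z| ≤ M) (hδ : 0 < δ) :
    nonlocalOp ν v x₀ ≤ ∫ y, jumpBound (2 * M) δ √(2 * M * δ) y ∂ν := by
  have hM0 : 0 ≤ M := (abs_nonneg _).trans (hM 0)
  refine integral_le_of_le_of_integrable_nonneg
    (integrable_jumpBound hν (by positivity) hδ.le (Real.sqrt_nonneg _))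
    (jumpBound_nonneg (by positivity) hδ.le (Real.sqrt_nonneg _)) fun y => ?_
  have hinc := hmax.sub_le_of_sub_mul_norm_sq y
  have hDv := hmax.fderiv_apply_eq_of_sub_mul_norm_sq hv y
  unfold jumpBound
  split_ifs with hy
  · rw [Set.indicator_of_mem (show y ∈ {y | ‖y‖ ≤ 1} from hy), hDv]
    linarith
  · rw [Set.indicator_of_notMem (show y ∉ {y | ‖y‖ ≤ 1} from hy), sub_zero]
    refine le_min (by linarith [(abs_le.1 (hM (x₀ + y))).2, (abs_le.1 (hM x₀)).1]) ?_
    have hx₀ := hmax.mul_norm_le_sqrt_of_sub_mul_norm_sq hδ.le hM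
    calc v (x₀ + y) - v x₀ ≤ 2 * (δ * ⟪x₀, y⟫) + δ * ‖y‖ ^ 2 := by linarith
      _ ≤ 2 * (δ * ‖x₀‖ * ‖y‖) + δ * ‖y‖ ^ 2 := by
        nlinarith [mul_le_mul_of_nonneg_left (real_inner_le_norm x₀ y) hδ.le]
      _ ≤ 2 * √(2 * M * δ) * ‖y‖ + δ * ‖y‖ ^ 2 := by
        rw [mul_assoc 2]
        gcongr

section Subsolution

variable {b : EuclideanSpace ℝ (Fin d) → EuclideanSpace ℝ (Fin d)}
  {v : EuclideanSpace ℝ (Fin d) → ℝ} {lam S M Mb : ℝ}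

theorem mul_le_add_of_subsolution (hν : Integrable (fun y => min 1 (‖y‖ ^ 2)) ν)
    (hb : ∀ x, ‖b x‖ ≤ Mb) (hlam : 0 ≤ lam) (hv : ContDiff ℝ 1 v) (hM : ∀ z, |v z| ≤ M)
    (hsub : ∀ x, lam * v x - nonlocalOp ν v x - fderiv ℝ v x (b x) ≤ S)
    {δ : ℝ} (hδ : 0 < δ) (x : EuclideanSpace ℝ (Fin d)) :
    lam * v x ≤ S + (lam * δ * ‖x‖ ^ 2 + ∫ y, jumpBound (2 * M) δ √(2 * M * δ) y ∂ν
      + 2 * √(2 * M * δ) * Mb) := by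
  obtain ⟨x₀, hmax⟩ := exists_isMaxOn_sub_mul_norm_sq hv.continuous
    (fun z => (abs_le.1 (hM z)).2) hδ
  have hdiff : DifferentiableAt ℝ v x₀ := hv.differentiable one_ne_zero x₀
  have hx : lam * v x ≤ lam * v x₀ + lam * δ * ‖x‖ ^ 2 := by
    have := isMaxOn_univ_iff.1 hmax x
    nlinarith [mul_nonneg hδ.le (sq_nonneg ‖x₀‖)]
  have hjump := nonlocalOp_le_integral_jumpBound hν hmax hdiff hM hδ
  have hdrift : fderiv ℝ v x₀ (b x₀) ≤ 2 * √(2 * M * δ) * Mb := by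
    rw [hmax.fderiv_apply_eq_of_sub_mul_norm_sq hdiff]
    calc 2 * δ * ⟪x₀, b x₀⟫ ≤ 2 * (δ * ‖x₀‖) * ‖b x₀‖ := by
          nlinarith [mul_le_mul_of_nonneg_left (real_inner_le_norm x₀ (b x₀)) hδ.le]
      _ ≤ 2 * √(2 * M * δ) * Mb := by
          gcongr
          · exact hmax.mul_norm_le_sqrt_of_sub_mul_norm_sq hδ.le hM
          · exact hb x₀
  linarith [hsub x₀]

theorem mul_le_of_subsolution (hν : Integrable (fun y => min 1 (‖y‖ ^ 2)) ν)
    (hb : ∀ x, ‖b x‖ ≤ Mb) (hlam : 0 ≤ lam) (hv : ContDiff ℝ 1 v) (hM : ∀ z, |v z| ≤ M)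
    (hsub : ∀ x, lam * v x - nonlocalOp ν v x - fderiv ℝ v x (b x) ≤ S)
    (x : EuclideanSpace ℝ (Fin d)) : lam * v x ≤ S := by
  have hM0 : 0 ≤ 2 * M := by linarith [(abs_nonneg _).trans (hM 0)]
  have hsqrt : Tendsto (fun δ => √(2 * M * δ)) (𝓝[>] 0) (𝓝 0) := by
    simpa using ((by fun_prop : Continuous fun δ => √(2 * M * δ)).tendsto 0).mono_left
      nhdsWithin_le_nhds
  have hpen : Tendsto (fun δ => lam * δ * ‖x‖ ^ 2) (𝓝[>] 0) (𝓝 0) := by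
    simpa using ((by fun_prop : Continuous fun δ => lam * δ * ‖x‖ ^ 2).tendsto 0).mono_left
      nhdsWithin_le_nhds
  have herror := ((hpen.add (tendsto_integral_jumpBound hν hM0)).add
    ((hsqrt.const_mul 2).mul_const Mb)).const_add S
  simp only [mul_zero, zero_mul, add_zero] at herror
  exact ge_of_tendsto herror <| eventually_mem_nhdsWithin.mono fun δ hδ =>
    mul_le_add_of_subsolution hν hb hlam hv hM hsub hδ x

end Subsolution

end Euclidean

theorem maximum_principle_general
    (d : ℕ) (ν : Measure (EuclideanSpace ℝ (Fin d))) (hν : IsLevyMeasure ν)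
    (b : EuclideanSpace ℝ (Fin d) → EuclideanSpace ℝ (Fin d))
    (hbB : ∃ M, ∀ x, ‖b x‖ ≤ M)
    (lam : ℝ) (hlam : 0 < lam)
    (g : EuclideanSpace ℝ (Fin d) → ℝ)
    (hgB : ∃ M, ∀ x, |g x| ≤ M)
    (v : EuclideanSpace ℝ (Fin d) → ℝ)
    (hv : ContDiff ℝ 1 v) (hvb : ∃ M, ∀ x, |v x| ≤ M)
    (heq : ∀ x, lam * v x - nonlocalOp ν v x - fderiv ℝ v x (b x) = g x) :
    ∀ x, |v x| ≤ (1 / lam) * ⨆ x, |g x| := by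
  obtain ⟨Mb, hb⟩ := hbB
  obtain ⟨Mg, hg⟩ := hgB
  obtain ⟨M, hM⟩ := hvb
  have hlevy := hν.integrable_min_one_norm_sq
  have hgS : ∀ x, |g x| ≤ ⨆ x, |g x| := le_ciSup ⟨Mg, Set.forall_mem_range.2 hg⟩
  have hupper := mul_le_of_subsolution hlevy hb hlam.le hv hM
    fun x => (heq x).le.trans ((le_abs_self _).trans (hgS x))
  have hlower := mul_le_of_subsolution (S := ⨆ x, |g x|) hlevy hb hlam.le hv.neg
    (fun x => (abs_neg (v x)).trans_le (hM x)) fun x => by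
      rw [nonlocalOp_neg, fderiv_fun_neg, neg_apply]
      linarith [heq x, neg_abs_le (g x), hgS x]
  intro x
  rw [one_div_mul_eq_div, abs_le, neg_le, le_div_iff₀' hlam, le_div_iff₀' hlam]
  exact ⟨hlower x, hupper x⟩

/-- maximum principle. If `v ∈ C_b^{1+γ}` solves
`λ v - ℒv - ⟨b, Dv⟩ = g` with `λ > 0`, then `‖v‖_∞ ≤ λ⁻¹ ‖g‖_∞`. -/
theorem maximum_principle
    (d : ℕ) (hd : 1 ≤ d) (γ : ℝ) (hγ : 0 < γ ∧ γ ≤ 1)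
    (ν : Measure (EuclideanSpace ℝ (Fin d))) (hν : IsLevyMeasure ν)
    (hmom : (∫⁻ y in {y : EuclideanSpace ℝ (Fin d) | ‖y‖ ≤ 1},
      ENNReal.ofReal (‖y‖ ^ (1 + γ)) ∂ν) < ⊤)
    (b : EuclideanSpace ℝ (Fin d) → EuclideanSpace ℝ (Fin d))
    (hbC : Continuous b) (hbB : ∃ M, ∀ x, ‖b x‖ ≤ M)
    (lam : ℝ) (hlam : 0 < lam)
    (g : EuclideanSpace ℝ (Fin d) → ℝ)
    (hgC : Continuous g) (hgB : ∃ M, ∀ x, |g x| ≤ M)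
    (v : EuclideanSpace ℝ (Fin d) → ℝ)
    (hv : ContDiff ℝ 1 v) (hvb : ∃ M, ∀ x, |v x| ≤ M)
    (hDvb : ∃ M, ∀ x, ‖fderiv ℝ v x‖ ≤ M)
    (hDvH : ∃ C, 0 ≤ C ∧ ∀ x y, ‖fderiv ℝ v x - fderiv ℝ v y‖ ≤ C * ‖x - y‖ ^ γ)
    (heq : ∀ x, lam * v x - nonlocalOp ν v x - fderiv ℝ v x (b x) = g x) :
    ∀ x, |v x| ≤ (1 / lam) * ⨆ x, |g x| :=
  maximum_principle_general d ν hν b hbB lam hlam g hgB v hv hvb heq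
end
end
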